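/- Let M > 0 and Λ > 0 with 9ΛM² < 1 and write S := √(1 − 9ΛM²). Define the quadratics N̂(a) := 54M²/S² − (12√3·M·(2 + 9ΛM²)/S³)·a + (18ΛM²·(20 + 9ΛM²)/S⁴)·a² and D̂(a) := 1458M⁴/S⁴ − (324√3·M³·(2 + 9ΛM²)/S⁵)·a + (54M²·(4 + 90ΛM² + 81Λ²M⁴)/S⁶)·a². Then, as a → 0, N̂(a)/D̂(a) − S²/(27M²) − (2·(45ΛM² − 2)/(729M⁴))·a² = O(a³); that is, there exist C > 0 and ε > 0 such that |N̂(a)/D̂(a) − S²/(27M²) − (2(45ΛM² − 2)/(729M⁴))a²| ≤ C|a|³ for all |a| < ε. -/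
import Mathlib


/-- `S = √(1 - 9ΛM²)`. -/
noncomputable def S (M Λ : ℝ) : ℝ := Real.sqrt (1 - 9 * Λ * M ^ 2)

/-- Second-order expansion of the numerator `R''(r₊(a))`:
`N̂(a) = 54M²/S² - (12√3·M·(2 + 9ΛM²)/S³)·a + (18ΛM²·(20 + 9ΛM²)/S⁴)·a²`. -/
noncomputable def Nhat (M Λ a : ℝ) : ℝ :=
  54 * M ^ 2 / (S M Λ) ^ 2 -
    (12 * Real.sqrt 3 * M * (2 + 9 * Λ * M ^ 2) / (S M Λ) ^ 3) * a +
    (18 * Λ * M ^ 2 * (20 + 9 * Λ * M ^ 2) / (S M Λ) ^ 4) * a ^ 2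

/-- Second-order expansion of the denominator `2r₊(a)⁴·ṫ(r₊(a))²`:
`D̂(a) = 1458M⁴/S⁴ - (324√3·M³·(2 + 9ΛM²)/S⁵)·a + (54M²·(4 + 90ΛM² + 81Λ²M⁴)/S⁶)·a²`. -/
noncomputable def Dhat (M Λ a : ℝ) : ℝ :=
  1458 * M ^ 4 / (S M Λ) ^ 4 -
    (324 * Real.sqrt 3 * M ^ 3 * (2 + 9 * Λ * M ^ 2) / (S M Λ) ^ 5) * a +
    (54 * M ^ 2 * (4 + 90 * Λ * M ^ 2 + 81 * Λ ^ 2 * M ^ 4) / (S M Λ) ^ 6) * a ^ 2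

set_option maxHeartbeats 1000000 in
/-- Generic version: the cancellation of the orders `a⁰, a¹, a²` is a purely
rational-function identity in `t` (playing the role of `S`) and `r` (playing
the role of `√3`), needing only `t ≠ 0`, `M ≠ 0`. -/
lemma stmt_9_generic (M Λ t r : ℝ) (hM : 0 < M) (hΛ : 0 < Λ) (ht : 0 < t) (hr : 0 < r) :
    ∃ C > 0, ∃ ε > 0, ∀ a : ℝ, |a| < ε →
      |(54 * M ^ 2 / t ^ 2 -
          (12 * r * M * (2 + 9 * Λ * M ^ 2) / t ^ 3) * a +
          (18 * Λ * M ^ 2 * (20 + 9 * Λ * M ^ 2) / t ^ 4) * a ^ 2) /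
        (1458 * M ^ 4 / t ^ 4 -
          (324 * r * M ^ 3 * (2 + 9 * Λ * M ^ 2) / t ^ 5) * a +
          (54 * M ^ 2 * (4 + 90 * Λ * M ^ 2 + 81 * Λ ^ 2 * M ^ 4) / t ^ 6) * a ^ 2) -
        t ^ 2 / (27 * M ^ 2) -
        (2 * (45 * Λ * M ^ 2 - 2) / (729 * M ^ 4)) * a ^ 2| ≤ C * |a| ^ 3 := by
  have hM' : (M : ℝ) ≠ 0 := hM.ne'
  have ht' : (t : ℝ) ≠ 0 := ht.ne'
  set A : ℝ := 8 * r * ((2 + 9 * Λ * M ^ 2) * (45 * Λ * M ^ 2 - 2)) / (9 * (M * t ^ 5)) with hAdef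
  set B : ℝ := -(4 * ((45 * Λ * M ^ 2 - 2) * (4 + 90 * Λ * M ^ 2 + 81 * Λ ^ 2 * M ^ 4)))
      / (27 * (M ^ 2 * t ^ 6)) with hBdef
  set D0 : ℝ := 1458 * M ^ 4 / t ^ 4 with hD0def
  set D1 : ℝ := 324 * r * M ^ 3 * (2 + 9 * Λ * M ^ 2) / t ^ 5 with hD1def
  have hD0 : 0 < D0 := by rw [hD0def]; positivity
  have hD1 : 0 < D1 := by rw [hD1def]; positivity
  refine ⟨(|A| + |B|) * 2 / D0 + 1, by positivity, min 1 (D0 / (2 * D1)), by positivity, ?_⟩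
  intro a ha
  have ha1 : |a| < 1 := lt_of_lt_of_le ha (min_le_left _ _)
  have ha2 : |a| ≤ D0 / (2 * D1) := le_of_lt (lt_of_lt_of_le ha (min_le_right _ _))
  set Dv : ℝ := 1458 * M ^ 4 / t ^ 4 -
          (324 * r * M ^ 3 * (2 + 9 * Λ * M ^ 2) / t ^ 5) * a +
          (54 * M ^ 2 * (4 + 90 * Λ * M ^ 2 + 81 * Λ ^ 2 * M ^ 4) / t ^ 6) * a ^ 2 with hDvdef
  -- lower bound for the denominator
  have hDlow : D0 / 2 ≤ Dv := by
    have h1 : D1 * a ≤ D1 * |a| := mul_le_mul_of_nonneg_left (le_abs_self a) hD1.le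
    have h2 : D1 * |a| ≤ D0 / 2 := by
      have := mul_le_mul_of_nonneg_left ha2 hD1.le
      have heq : D1 * (D0 / (2 * D1)) = D0 / 2 := by
        field_simp
      linarith [heq ▸ this]
    have h3 : 0 ≤ (54 * M ^ 2 * (4 + 90 * Λ * M ^ 2 + 81 * Λ ^ 2 * M ^ 4) / t ^ 6) * a ^ 2 := by
      positivity
    have : Dv = D0 - D1 * a + (54 * M ^ 2 * (4 + 90 * Λ * M ^ 2 + 81 * Λ ^ 2 * M ^ 4) / t ^ 6) * a ^ 2 := by
      rw [hDvdef, hD0def, hD1def]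
    linarith [this]
  have hDpos : 0 < Dv := lt_of_lt_of_le (by positivity) hDlow
  have hDne : Dv ≠ 0 := hDpos.ne'
  -- key polynomial identity
  have key : (54 * M ^ 2 / t ^ 2 -
          (12 * r * M * (2 + 9 * Λ * M ^ 2) / t ^ 3) * a +
          (18 * Λ * M ^ 2 * (20 + 9 * Λ * M ^ 2) / t ^ 4) * a ^ 2) -
        (t ^ 2 / (27 * M ^ 2) + (2 * (45 * Λ * M ^ 2 - 2) / (729 * M ^ 4)) * a ^ 2) * Dv
        = a ^ 3 * (A + B * a) := by
    rw [hDvdef, hAdef, hBdef]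
    field_simp
    ring
  have hre : (54 * M ^ 2 / t ^ 2 -
          (12 * r * M * (2 + 9 * Λ * M ^ 2) / t ^ 3) * a +
          (18 * Λ * M ^ 2 * (20 + 9 * Λ * M ^ 2) / t ^ 4) * a ^ 2) / Dv -
        t ^ 2 / (27 * M ^ 2) -
        (2 * (45 * Λ * M ^ 2 - 2) / (729 * M ^ 4)) * a ^ 2
        = a ^ 3 * (A + B * a) / Dv := by
    rw [eq_div_iff hDne, sub_mul, sub_mul, div_mul_cancel₀ _ hDne]
    linear_combination key
  rw [hre, abs_div, abs_of_pos hDpos, abs_mul, abs_pow]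
  have h3 : |A + B * a| ≤ |A| + |B| := by
    calc |A + B * a| ≤ |A| + |B * a| := abs_add_le _ _
      _ = |A| + |B| * |a| := by rw [abs_mul]
      _ ≤ |A| + |B| * 1 := by nlinarith [abs_nonneg B]
      _ = |A| + |B| := by ring
  have hstep : |a| ^ 3 * |A + B * a| / Dv ≤ |a| ^ 3 * (|A| + |B|) / (D0 / 2) := by
    apply div_le_div₀ (by positivity) ?_ (by positivity) hDlow
    exact mul_le_mul_of_nonneg_left h3 (by positivity)
  calc |a| ^ 3 * |A + B * a| / Dv ≤ |a| ^ 3 * (|A| + |B|) / (D0 / 2) := hstep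
    _ = ((|A| + |B|) * 2 / D0) * |a| ^ 3 := by field_simp
    _ ≤ ((|A| + |B|) * 2 / D0 + 1) * |a| ^ 3 := by nlinarith [abs_nonneg a, pow_nonneg (abs_nonneg a) 3]

/-- as `a → 0`,
`N̂(a)/D̂(a) - S²/(27M²) - (2(45ΛM² - 2)/(729M⁴))·a² = O(a³)`, with explicit
constants `C > 0`, `ε > 0`. -/
theorem stmt_9 (M Λ : ℝ) (hM : 0 < M) (hΛ : 0 < Λ) (hsub : 9 * Λ * M ^ 2 < 1) :
    ∃ C > 0, ∃ ε > 0, ∀ a : ℝ, |a| < ε →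
      |Nhat M Λ a / Dhat M Λ a - (S M Λ) ^ 2 / (27 * M ^ 2) -
        (2 * (45 * Λ * M ^ 2 - 2) / (729 * M ^ 4)) * a ^ 2| ≤ C * |a| ^ 3 := by
  have hs : 0 < 1 - 9 * Λ * M ^ 2 := by linarith
  have ht : 0 < S M Λ := Real.sqrt_pos.2 hs
  have hr : 0 < Real.sqrt 3 := Real.sqrt_pos.2 (by norm_num)
  simpa [Nhat, Dhat] using stmt_9_generic M Λ (S M Λ) (Real.sqrt 3) hM hΛ ht hr
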